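/- Let X₁ and X₂ be standard Borel spaces. The cross-product map (D₁, D₂) ↦ D₁ ×ˢ D₂ (the multiset of all pairs (x₁, x₂) with x₁ ∈ D₁ and x₂ ∈ D₂, so that the multiplicity of (x₁, x₂) is the product of the multiplicity of x₁ in D₁ and the multiplicity of x₂ in D₂) from Multiset X₁ × Multiset X₂ to Multiset (X₁ × X₂) is measurable, where each Multiset space carries its counting σ-algebra, Multiset X₁ × Multiset X₂ the product σ-algebra, and X₁ × X₂ the product measurable structure. -/

import Mathlib

/- `countIn D E` is the number of elements of the finite multiset `D` lying in the set `E`,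
counted with multiplicity. -/
open Classical in
noncomputable def countIn {X : Type*} (D : Multiset X) (E : Set X) : ℕ :=
  (D.filter (· ∈ E)).card

/-- The counting σ-algebra on the space of finite multisets over a measurable space `X`:
generated by the counting events `C(E,n) = {D | countIn D E = n}` for `E` measurable, `n : ℕ`. -/
def countingMS (X : Type*) [MeasurableSpace X] : MeasurableSpace (Multiset X) :=
  MeasurableSpace.generateFrom
    {C : Set (Multiset X) |
      ∃ (E : Set X) (n : ℕ), MeasurableSet E ∧ C = {D : Multiset X | countIn D E = n}}

/-!
View a finite multiset `D` as the finite measure `∑_{x ∈ D} δ_x`, which gives mass `countIn D E`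
to every measurable `E`. The counting σ-algebra is then the pullback of the Giry σ-algebra on
measures, so it suffices that `(D₁, D₂) ↦ (D₁ ×ˢ D₂)(E)` is measurable for measurable `E`. By the
π-λ theorem for finite measures it is enough to take `E = E₁ ×ˢ E₂` a measurable rectangle, where
the count factors as `countIn D₁ E₁ * countIn D₂ E₂`.
-/

open MeasureTheory MeasurableSpace ENNReal

theorem Multiset.filter_product {α β : Type*} (p : α → Prop) (q : β → Prop) [DecidablePred p]
    [DecidablePred q] (s : Multiset α) (t : Multiset β) :
    (s ×ˢ t).filter (fun x => p x.1 ∧ q x.2) = s.filter p ×ˢ t.filter q := by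
  induction s using Multiset.induction with
  | empty => simp
  | cons a s ih =>
    by_cases ha : p a <;>
      simp [Multiset.cons_product, Multiset.filter_add, Multiset.filter_map, ih, ha]

section

variable {X Y : Type*}

theorem countIn_product (D₁ : Multiset X) (D₂ : Multiset Y) (E₁ : Set X) (E₂ : Set Y) :
    countIn (D₁ ×ˢ D₂) (E₁ ×ˢ E₂) = countIn D₁ E₁ * countIn D₂ E₂ := by
  classical
  simp only [countIn, Set.mem_prod]
  rw [Multiset.filter_product, Multiset.card_product]

variable [MeasurableSpace X]

noncomputable def countMeasure (D : Multiset X) : Measure X := (D.map Measure.dirac).sum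

theorem countMeasure_apply (D : Multiset X) {E : Set X} (hE : MeasurableSet E) :
    countMeasure D E = countIn D E := by
  classical
  induction D using Multiset.induction with
  | empty => simp [countMeasure, countIn]
  | cons a D ih =>
    by_cases ha : a ∈ E <;> simp_all [countMeasure, countIn, Measure.dirac_apply' _ hE, add_comm]

instance (D : Multiset X) : IsFiniteMeasure (countMeasure D) :=
  ⟨by simp [countMeasure_apply D MeasurableSet.univ]⟩

theorem countMeasure_product_apply_prod [MeasurableSpace Y] (D₁ : Multiset X)
    (D₂ : Multiset Y) {E₁ : Set X} {E₂ : Set Y} (hE₁ : MeasurableSet E₁) (hE₂ : MeasurableSet E₂) :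
    countMeasure (D₁ ×ˢ D₂) (E₁ ×ˢ E₂) = countMeasure D₁ E₁ * countMeasure D₂ E₂ := by
  rw [countMeasure_apply _ (hE₁.prod hE₂), countMeasure_apply _ hE₁, countMeasure_apply _ hE₂,
    countIn_product, Nat.cast_mul]

theorem measurable_countIn {E : Set X} (hE : MeasurableSet E) :
    Measurable[countingMS X] fun D => countIn D E :=
  @measurable_to_countable' _ _ _ _ (countingMS X) _ fun n =>
    measurableSet_generateFrom ⟨E, n, hE, rfl⟩

theorem measurable_countingMS_iff {Ω : Type*} [MeasurableSpace Ω] {F : Ω → Multiset X} :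
    Measurable[_, countingMS X] F ↔ Measurable fun ω => countMeasure (F ω) := by
  let := countingMS X
  rw [Measure.measurable_measure]
  refine ⟨fun hF E hE => ?_, fun hF => measurable_generateFrom ?_⟩
  · simp only [countMeasure_apply _ hE]
    exact measurable_from_nat.comp ((measurable_countIn hE).comp hF)
  · rintro _ ⟨E, n, hE, rfl⟩
    simpa [Set.preimage, countMeasure_apply _ hE] using hF E hE (measurableSet_singleton (n : ℝ≥0∞))

end

theorem crossProduct_measurable_general {X₁ X₂ : Type*} [MeasurableSpace X₁] [MeasurableSpace X₂] :
    @Measurable _ _ ((countingMS X₁).prod (countingMS X₂)) (countingMS (X₁ × X₂))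
      (fun p : Multiset X₁ × Multiset X₂ => p.1 ×ˢ p.2) := by
  let := countingMS X₁
  let := countingMS X₂
  have rectangle {E₁ : Set X₁} {E₂ : Set X₂} (hE₁ : MeasurableSet E₁) (hE₂ : MeasurableSet E₂) :
      Measurable fun p : Multiset X₁ × Multiset X₂ => countMeasure (p.1 ×ˢ p.2) (E₁ ×ˢ E₂) := by
    simp only [countMeasure_product_apply_prod _ _ hE₁ hE₂]
    exact ((Measure.measurable_coe hE₁).comp (measurable_countingMS_iff.1 measurable_fst)).mul
      ((Measure.measurable_coe hE₂).comp (measurable_countingMS_iff.1 measurable_snd))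
  refine measurable_countingMS_iff.2 <|
    .measure_of_isPiSystem generateFrom_prod.symm isPiSystem_prod ?_ ?_
  · rintro _ ⟨E₁, hE₁, E₂, hE₂, rfl⟩
    exact rectangle hE₁ hE₂
  · simpa only [Set.univ_prod_univ] using rectangle .univ .univ

theorem crossProduct_measurable {X₁ X₂ : Type*} [MeasurableSpace X₁] [StandardBorelSpace X₁]
    [MeasurableSpace X₂] [StandardBorelSpace X₂] :
    @Measurable _ _ ((countingMS X₁).prod (countingMS X₂)) (countingMS (X₁ × X₂))
      (fun p : Multiset X₁ × Multiset X₂ => p.1 ×ˢ p.2) :=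
  crossProduct_measurable_general
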